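/- Leibniz law for standard Leibniz models: let A be a complete Heyting algebra equipped with its saturated Fidel structure N_x = {y ∈ A : x ∨ y = 1}, and let ‖·‖ be the standard Leibniz interpretation on V^A. Then Leibniz law holds: for every formula φ(x) with one free variable and all A-names u, v, ‖u ≈ v‖ ≤ ‖φ(u) → φ(v)‖. -/

import Mathlib

universe u

/-- The universe `V^A` of `A`-names over a complete Heyting algebra `A`:
an `A`-name is a function from a set (of previously constructed `A`-names)
into `A`, here encoded by an indexing type `ι`, a family `elts` of names and
the family `val` of their attached truth values. -/
inductive HName (A : Type u) : Type (u + 1) where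
  | mk (ι : Type u) (elts : ι → HName A) (val : ι → A)

namespace HName

variable {A : Type u}

/-- The indexing type of (the domain of) a name. -/
def ι : HName A → Type u
  | mk ι _ _ => ι

/-- The members of (the domain of) a name. -/
def elts : (u : HName A) → u.ι → HName A
  | mk _ e _ => e

/-- The values attached by a name to the members of its domain. -/
def val : (u : HName A) → u.ι → A
  | mk _ _ v => v

/-- Ordinal rank of a name (used for the recursive definition of truth values). -/
noncomputable def rank : HName A → Ordinal.{u}
  | mk _ e _ => Ordinal.lsub fun i => (e i).rank

theorem rank_lt {ι : Type u} (e : ι → HName A) (v : ι → A) (i : ι) :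
    (e i).rank < (mk ι e v).rank := Ordinal.lt_lsub _ i

variable [Order.Frame A]

/-- The truth value `‖u ≈ v‖` of equality of two names, defined by the recursion
`‖u ≈ v‖ = ⨅_{x ∈ dom u} (u(x) ⇨ ‖x ∈ v‖) ⊓ ⨅_{y ∈ dom v} (v(y) ⇨ ‖y ∈ u‖)`,
where `‖x ∈ v‖ = ⨆_{y ∈ dom v} (v(y) ⊓ ‖y ≈ x‖)` is inlined. -/
noncomputable def eqVal : HName A → HName A → A
  | mk ι e a, mk κ f b =>
      (⨅ i, a i ⇨ ⨆ j, b j ⊓ eqVal (f j) (e i)) ⊓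
      (⨅ j, b j ⇨ ⨆ i, a i ⊓ eqVal (e i) (f j))
termination_by u v => max u.rank v.rank
decreasing_by
  · exact max_lt (lt_of_lt_of_le (rank_lt f b j) (le_max_right _ _))
      (lt_of_lt_of_le (rank_lt e a i) (le_max_left _ _))
  · exact max_lt (lt_of_lt_of_le (rank_lt e a i) (le_max_left _ _))
      (lt_of_lt_of_le (rank_lt f b j) (le_max_right _ _))

/-- The truth value `‖u ∈ v‖ = ⨆_{x ∈ dom v} (v(x) ⊓ ‖x ≈ u‖)` of membership. -/
noncomputable def memVal (u v : HName A) : A :=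
  ⨆ j : v.ι, v.val j ⊓ eqVal (v.elts j) u

end HName


/-- Terms of the first-order language of set theory expanded with all `A`-names
as constants: variables (de Bruijn indices) and names. -/
inductive Tm (A : Type u) (n : Nat) : Type (u + 1) where
  | var (i : Fin n) : Tm A n
  | name (u : HName A) : Tm A n

/-- Formulas of the first-order language with binary predicates `∈` and `≈`,
connectives `∧`, `∨`, `→`, `¬` and quantifiers `∃`, `∀`, with `A`-names as
constants; `Fml A n` are the formulas with free variables among `n` de Bruijn
indices, and the quantifiers bind the last variable of the context. -/
inductive Fml (A : Type u) : Nat → Type (u + 1) where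
  | mem {n} (t s : Tm A n) : Fml A n
  | eq {n} (t s : Tm A n) : Fml A n
  | and {n} (phi psi : Fml A n) : Fml A n
  | or {n} (phi psi : Fml A n) : Fml A n
  | imp {n} (phi psi : Fml A n) : Fml A n
  | neg {n} (phi : Fml A n) : Fml A n
  | ex {n} (phi : Fml A (n + 1)) : Fml A n
  | all {n} (phi : Fml A (n + 1)) : Fml A n

variable {A : Type u}

/-- Evaluation of a term under an assignment of names to the free variables. -/
def Tm.eval {n : Nat} : Tm A n → (Fin n → HName A) → HName A
  | var i, rho => rho i
  | name u, _ => u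

/-- Renaming (in particular, weakening) of the free variables of a term. -/
def Tm.rename {n m : Nat} (f : Fin n → Fin m) : Tm A n → Tm A m
  | var i => var (f i)
  | name u => name u

/-- Renaming (in particular, weakening) of the free variables of a formula. -/
def Fml.rename : {n m : Nat} → (Fin n → Fin m) → Fml A n → Fml A m
  | _, _, f, mem t s => mem (t.rename f) (s.rename f)
  | _, _, f, eq t s => eq (t.rename f) (s.rename f)
  | _, _, f, and phi psi => and (phi.rename f) (psi.rename f)
  | _, _, f, or phi psi => or (phi.rename f) (psi.rename f)
  | _, _, f, imp phi psi => imp (phi.rename f) (psi.rename f)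
  | _, _, f, neg phi => neg (phi.rename f)
  | _, _, f, ex phi => ex (phi.rename (Fin.snoc (Fin.castSucc ∘ f) (Fin.last _)))
  | _, _, f, all phi => all (phi.rename (Fin.snoc (Fin.castSucc ∘ f) (Fin.last _)))

/-- `φ ↔ ψ` abbreviates `(φ → ψ) ∧ (ψ → φ)`. -/
def Fml.iff {n : Nat} (phi psi : Fml A n) : Fml A n :=
  .and (.imp phi psi) (.imp psi phi)

/-- A (complete) Fidel structure for `C_ω` over the complete Heyting algebra
`A`: for each `x ∈ A`, `N x` is a nonempty set of "possible negations" of `x`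
such that `x ⊔ y = ⊤` for every `y ∈ N x` and, for every `y ∈ N x`, there is
`z ∈ N y` with `z ≤ x`. -/
def IsFidel [Order.Frame A] (N : A → Set A) : Prop :=
  ∀ x : A, (N x).Nonempty ∧ (∀ y ∈ N x, x ⊔ y = ⊤) ∧ ∀ y ∈ N x, ∃ z ∈ N y, z ≤ x

/-- A Leibniz truth-value interpretation on the `A`-names over the complete
`C_ω`-structure `⟨A, N⟩`: a map assigning to every formula (with names as
constants) and every assignment of names to its free variables a truth value in
`A`, satisfying the atomic clauses for `∈` and `≈`, the compositional clauses
for `∧`, `∨`, `→`, `∃`, `∀`, the clauses `‖¬φ‖ ∈ N ‖φ‖` and `‖¬¬φ‖ ≤ ‖φ‖` for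
the paraconsistent negation, and Leibniz law `‖u ≈ v‖ ≤ ‖φ(u) → φ(v)‖` for
every formula `φ(x)` with one free variable and all names `u`, `v`. -/
structure Interp (A : Type u) [Order.Frame A] (N : A → Set A) : Type (u + 1) where
  val : {n : Nat} → Fml A n → (Fin n → HName A) → A
  val_mem : ∀ {n} (t s : Tm A n) (rho : Fin n → HName A),
    val (.mem t s) rho = HName.memVal (t.eval rho) (s.eval rho)
  val_eq : ∀ {n} (t s : Tm A n) (rho : Fin n → HName A),
    val (.eq t s) rho = HName.eqVal (t.eval rho) (s.eval rho)
  val_and : ∀ {n} (phi psi : Fml A n) (rho : Fin n → HName A),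
    val (.and phi psi) rho = val phi rho ⊓ val psi rho
  val_or : ∀ {n} (phi psi : Fml A n) (rho : Fin n → HName A),
    val (.or phi psi) rho = val phi rho ⊔ val psi rho
  val_imp : ∀ {n} (phi psi : Fml A n) (rho : Fin n → HName A),
    val (.imp phi psi) rho = val phi rho ⇨ val psi rho
  val_ex : ∀ {n} (phi : Fml A (n + 1)) (rho : Fin n → HName A),
    val (.ex phi) rho = ⨆ u : HName A, val phi (Fin.snoc rho u)
  val_all : ∀ {n} (phi : Fml A (n + 1)) (rho : Fin n → HName A),
    val (.all phi) rho = ⨅ u : HName A, val phi (Fin.snoc rho u)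
  val_neg : ∀ {n} (phi : Fml A n) (rho : Fin n → HName A),
    val (.neg phi) rho ∈ N (val phi rho)
  val_negneg : ∀ {n} (phi : Fml A n) (rho : Fin n → HName A),
    val (.neg (.neg phi)) rho ≤ val phi rho
  leibniz : ∀ (phi : Fml A 1) (u v : HName A),
    HName.eqVal u v ≤ val phi (fun _ => u) ⇨ val phi (fun _ => v)


/-- The standard Leibniz interpretation on `V^A`: the compositional
interpretation with the atomic clauses for `∈` and `≈` and, for negation,
`‖¬ψ‖ = 1` whenever `ψ` is not of the form `¬χ`, and `‖¬¬ψ‖ = ‖ψ‖` whenever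
`ψ` is not of the form `¬χ`. -/
noncomputable def stdVal [Order.Frame A] : {n : Nat} → Fml A n → (Fin n → HName A) → A
  | _, .mem t s, rho => HName.memVal (t.eval rho) (s.eval rho)
  | _, .eq t s, rho => HName.eqVal (t.eval rho) (s.eval rho)
  | _, .and phi psi, rho => stdVal phi rho ⊓ stdVal psi rho
  | _, .or phi psi, rho => stdVal phi rho ⊔ stdVal psi rho
  | _, .imp phi psi, rho => stdVal phi rho ⇨ stdVal psi rho
  | _, .neg (.neg phi), rho => stdVal phi rho
  | _, .neg _, _ => ⊤
  | _, .ex phi, rho => ⨆ u : HName A, stdVal phi (Fin.snoc rho u)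
  | _, .all phi, rho => ⨅ u : HName A, stdVal phi (Fin.snoc rho u)

/-- The saturated Fidel structure on `A`: `N x = {y ∈ A : x ⊔ y = ⊤}`. -/
def saturatedN (A : Type u) [Order.Frame A] : A → Set A := fun x => {y : A | x ⊔ y = ⊤}

/-! `‖u ≈ v‖` is reflexive, symmetric and transitive, and `‖u ∈ v‖` respects it in both
arguments; transitivity is proved by well-founded recursion on the ranks of the three names.
Leibniz law then follows from the stronger congruence
`⨅ᵢ ‖ρ i ≈ σ i‖ ⊓ ‖φ[ρ]‖ ≤ ‖φ[σ]‖`, by induction on `φ`: the only clause not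
inherited from the Heyting operations is negation, where `‖¬ψ‖` is either `⊤` or the value
of a subformula. -/

namespace HName

theorem rank_elts_lt (x : HName A) (i : x.ι) : (x.elts i).rank < x.rank := by
  cases x; exact rank_lt _ _ i

variable [Order.Frame A]

theorem eqVal_eq (u v : HName A) :
    eqVal u v = (⨅ i, u.val i ⇨ memVal (u.elts i) v) ⊓ (⨅ j, v.val j ⇨ memVal (v.elts j) u) := by
  cases u; cases v; rw [eqVal]; rfl

theorem val_inf_eqVal_le_memVal (u v : HName A) (i : u.ι) :
    u.val i ⊓ eqVal u v ≤ memVal (u.elts i) v := by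
  rw [eqVal_eq, ← le_himp_iff']
  exact inf_le_left.trans (iInf_le _ i)

theorem eqVal_refl : ∀ u : HName A, eqVal u u = ⊤
  | mk ι e a => by
    rw [eqVal_eq, inf_idem, eq_top_iff]
    refine le_iInf fun i => le_himp_iff.2 (inf_le_right.trans (le_iSup_of_le i ?_))
    change a i ≤ a i ⊓ eqVal (e i) (e i)
    rw [eqVal_refl (e i), inf_top_eq]

theorem eqVal_symm (u v : HName A) : eqVal u v = eqVal v u := by
  rw [eqVal_eq, eqVal_eq v, inf_comm]

-- The form of `memVal_congr_right` available inside the recursion proving `eqVal_trans`.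
theorem memVal_congr_right_of_trans (x v w : HName A)
    (htrans : ∀ j k, eqVal (w.elts k) (v.elts j) ⊓ eqVal (v.elts j) x ≤ eqVal (w.elts k) x) :
    eqVal v w ⊓ memVal x v ≤ memVal x w := by
  rw [memVal, inf_iSup_eq]
  refine iSup_le fun j => ?_
  calc eqVal v w ⊓ (v.val j ⊓ eqVal (v.elts j) x)
      ≤ memVal (v.elts j) w ⊓ eqVal (v.elts j) x := by
        rw [← inf_assoc, inf_comm (eqVal v w)]
        exact inf_le_inf_right _ (val_inf_eqVal_le_memVal v w j)
    _ ≤ memVal x w := by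
        rw [memVal, iSup_inf_eq]
        refine iSup_mono fun k => ?_
        rw [inf_assoc]
        exact inf_le_inf_left _ (htrans j k)

theorem eqVal_trans (u v w : HName A) : eqVal u v ⊓ eqVal v w ≤ eqVal u w := by
  rw [eqVal_eq u w]
  refine le_inf (le_iInf fun i => le_himp_iff.2 ?_) (le_iInf fun k => le_himp_iff.2 ?_)
  · calc eqVal u v ⊓ eqVal v w ⊓ u.val i
        ≤ eqVal v w ⊓ memVal (u.elts i) v := by
          refine le_inf (inf_le_left.trans inf_le_right) ?_
          exact (le_inf inf_le_right (inf_le_left.trans inf_le_left)).trans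
            (val_inf_eqVal_le_memVal u v i)
      _ ≤ memVal (u.elts i) w :=
          memVal_congr_right_of_trans _ v w fun j k => eqVal_trans _ _ _
  · calc eqVal u v ⊓ eqVal v w ⊓ w.val k
        ≤ eqVal v u ⊓ memVal (w.elts k) v := by
          rw [eqVal_symm u v, eqVal_symm v w]
          refine le_inf (inf_le_left.trans inf_le_left) ?_
          exact (le_inf inf_le_right (inf_le_left.trans inf_le_right)).trans
            (val_inf_eqVal_le_memVal w v k)
      _ ≤ memVal (w.elts k) u :=
          memVal_congr_right_of_trans _ v u fun j i => eqVal_trans _ _ _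
termination_by max (max u.rank v.rank) w.rank
decreasing_by
  all_goals
    refine max_lt (max_lt ?_ ?_) ?_ <;> exact (rank_elts_lt _ _).trans_le (by simp)

theorem memVal_congr_right (x v w : HName A) : eqVal v w ⊓ memVal x v ≤ memVal x w :=
  memVal_congr_right_of_trans x v w fun _ _ => eqVal_trans _ _ _

theorem memVal_congr_left (x y v : HName A) : eqVal x y ⊓ memVal x v ≤ memVal y v := by
  rw [memVal, memVal, inf_iSup_eq]
  refine iSup_mono fun j => ?_
  rw [inf_left_comm, inf_comm (eqVal x y)]
  exact inf_le_inf_left _ (eqVal_trans _ _ _)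

theorem memVal_congr (x y v w : HName A) :
    eqVal x y ⊓ eqVal v w ⊓ memVal x v ≤ memVal y w := by
  calc eqVal x y ⊓ eqVal v w ⊓ memVal x v ≤ eqVal v w ⊓ memVal y v :=
        le_inf (inf_le_left.trans inf_le_right)
          ((inf_le_inf_right _ inf_le_left).trans (memVal_congr_left x y v))
    _ ≤ memVal y w := memVal_congr_right y v w

theorem eqVal_congr (x y v w : HName A) :
    eqVal x y ⊓ eqVal v w ⊓ eqVal x v ≤ eqVal y w := by
  rw [eqVal_symm x y, inf_right_comm]
  exact (inf_le_inf_right _ (eqVal_trans y x v)).trans (eqVal_trans y v w)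

end HName

section Congruence

open HName

variable [Order.Frame A]

theorem Tm.iInf_eqVal_le_eqVal_eval {n : Nat} (t : Tm A n) (rho sigma : Fin n → HName A) :
    (⨅ i, eqVal (rho i) (sigma i)) ≤ eqVal (t.eval rho) (t.eval sigma) := by
  cases t with
  | var i => exact iInf_le _ i
  | name u => simp [Tm.eval, eqVal_refl]

theorem iInf_eqVal_comm {n : Nat} (rho sigma : Fin n → HName A) :
    (⨅ i, eqVal (rho i) (sigma i)) = ⨅ i, eqVal (sigma i) (rho i) :=
  iInf_congr fun _ => eqVal_symm _ _

theorem iInf_eqVal_le_iInf_eqVal_snoc {n : Nat} (rho sigma : Fin n → HName A) (w : HName A) :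
    (⨅ i, eqVal (rho i) (sigma i)) ≤
      ⨅ i : Fin (n + 1), eqVal ((Fin.snoc rho w : Fin (n + 1) → HName A) i)
        ((Fin.snoc sigma w : Fin (n + 1) → HName A) i) := by
  refine le_iInf fun i => Fin.lastCases ?_ (fun j => ?_) i
  · simp [eqVal_refl]
  · simpa only [Fin.snoc_castSucc] using iInf_le _ j

theorem stdVal_congr : ∀ {n : Nat} (phi : Fml A n) (rho sigma : Fin n → HName A),
    (⨅ i, eqVal (rho i) (sigma i)) ⊓ stdVal phi rho ≤ stdVal phi sigma
  | _, .mem t s, rho, sigma =>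
    (inf_le_inf_right _ (le_inf (t.iInf_eqVal_le_eqVal_eval rho sigma)
      (s.iInf_eqVal_le_eqVal_eval rho sigma))).trans (memVal_congr _ _ _ _)
  | _, .eq t s, rho, sigma =>
    (inf_le_inf_right _ (le_inf (t.iInf_eqVal_le_eqVal_eval rho sigma)
      (s.iInf_eqVal_le_eqVal_eval rho sigma))).trans (eqVal_congr _ _ _ _)
  | _, .and phi psi, rho, sigma =>
    le_inf ((inf_le_inf_left _ inf_le_left).trans (stdVal_congr phi rho sigma))
      ((inf_le_inf_left _ inf_le_right).trans (stdVal_congr psi rho sigma))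
  | _, .or phi psi, rho, sigma => by
    simp only [stdVal]
    rw [inf_sup_left]
    exact sup_le_sup (stdVal_congr phi rho sigma) (stdVal_congr psi rho sigma)
  | _, .imp phi psi, rho, sigma => by
    simp only [stdVal]
    rw [le_himp_iff, inf_right_comm]
    have hphi : (⨅ i, eqVal (rho i) (sigma i)) ⊓ stdVal phi sigma ≤ stdVal phi rho := by
      simpa only [iInf_eqVal_comm sigma rho] using stdVal_congr phi sigma rho
    calc (⨅ i, eqVal (rho i) (sigma i)) ⊓ stdVal phi sigma ⊓ (stdVal phi rho ⇨ stdVal psi rho)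
        ≤ (⨅ i, eqVal (rho i) (sigma i)) ⊓ stdVal psi rho :=
          le_inf (inf_le_left.trans inf_le_left)
            ((inf_le_inf_right _ (le_inf inf_le_left hphi)).trans
              ((inf_le_inf_right _ inf_le_right).trans inf_himp_le))
      _ ≤ stdVal psi sigma := stdVal_congr psi rho sigma
  | _, .neg phi, rho, sigma => by
    cases phi with
    | neg phi => exact stdVal_congr phi rho sigma
    | _ => simp [stdVal]
  | _, .ex phi, rho, sigma => by
    simp only [stdVal]
    rw [inf_iSup_eq]
    exact iSup_mono fun w =>
      (inf_le_inf_right _ (iInf_eqVal_le_iInf_eqVal_snoc rho sigma w)).trans (stdVal_congr phi _ _)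
  | _, .all phi, rho, sigma => by
    simp only [stdVal]
    exact le_iInf fun w =>
      (inf_le_inf (iInf_eqVal_le_iInf_eqVal_snoc rho sigma w) (iInf_le _ w)).trans
        (stdVal_congr phi _ _)

end Congruence

/-- Leibniz law for standard Leibniz models: over any complete Heyting algebra
`A` equipped with its saturated Fidel structure, the standard Leibniz
interpretation satisfies Leibniz law: for every formula `φ(x)` with one free
variable and all `A`-names `u`, `v`, `‖u ≈ v‖ ≤ ‖φ(u) → φ(v)‖`. -/
theorem stdVal_leibniz {A : Type u} [Order.Frame A] (phi : Fml A 1) (u v : HName A) :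
    HName.eqVal u v ≤ stdVal phi (fun _ => u) ⇨ stdVal phi (fun _ => v) :=
  le_himp_iff.2 ((inf_le_inf_right _ (le_iInf fun _ => le_rfl)).trans
    (stdVal_congr phi (fun _ => u) (fun _ => v)))
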